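/- Assume the pair (ζ, n) satisfies condition (★) with respect to (m, v_0, v_1, ℓ, ζ⁰). Let X be an ADHM representation with dim V_∞ = 1, dim V_0 = v_0 and dim V_1 = v_1, and let F• be a full flag of V_1 of length N = v_1. Let T be a proper submodule of X with T_∞ = V_∞ and (m+1)·(v_0 − dim T_0) = m·(v_1 − dim T_1). Then μ_{ζ,n}(T) ≠ μ_{ζ,n}(X), and μ_{ζ,n}(T) < μ_{ζ,n}(X) holds if and only if F^ℓ ⊄ T_1. -/

import Mathlib

open Module


section ADHMPrelim

/-- An ADHM representation on the blow-up quiver: vector spaces `V0, V1, Vinf` and maps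
`B1 B2 : V1 → V0`, `d : V0 → V1`, and `r`-tuples of maps `i : Vinf → V0`, `j : V1 → Vinf`
(encoding `i : Vinf ⊗ ℂ^r → V0` and `j : V1 → Vinf ⊗ ℂ^r`), satisfying the ADHM relation
`B1 ∘ d ∘ B2 - B2 ∘ d ∘ B1 + i ∘ j = 0`. -/
structure ADHMData (r : ℕ) (V0 V1 Vinf : Type*)
    [AddCommGroup V0] [Module ℂ V0] [AddCommGroup V1] [Module ℂ V1]
    [AddCommGroup Vinf] [Module ℂ Vinf] where
  B1 : V1 →ₗ[ℂ] V0
  B2 : V1 →ₗ[ℂ] V0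
  d : V0 →ₗ[ℂ] V1
  i : Fin r → (Vinf →ₗ[ℂ] V0)
  j : Fin r → (V1 →ₗ[ℂ] Vinf)
  rel : B1 ∘ₗ d ∘ₗ B2 - B2 ∘ₗ d ∘ₗ B1 + ∑ k : Fin r, (i k) ∘ₗ (j k) = 0

variable {r : ℕ} {V0 V1 Vinf : Type*}
  [AddCommGroup V0] [Module ℂ V0] [AddCommGroup V1] [Module ℂ V1]
  [AddCommGroup Vinf] [Module ℂ Vinf]

/-- A submodule of an ADHM representation: a triple of subspaces invariant under all the
structure maps. -/
structure ADHMSub (X : ADHMData r V0 V1 Vinf) where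
  S0 : Submodule ℂ V0
  S1 : Submodule ℂ V1
  Sinf : Submodule ℂ Vinf
  hB1 : ∀ x ∈ S1, X.B1 x ∈ S0
  hB2 : ∀ x ∈ S1, X.B2 x ∈ S0
  hd : ∀ x ∈ S0, X.d x ∈ S1
  hi : ∀ (k : Fin r), ∀ x ∈ Sinf, X.i k x ∈ S0
  hj : ∀ (k : Fin r), ∀ x ∈ S1, X.j k x ∈ Sinf

namespace ADHMSub

variable {X : ADHMData r V0 V1 Vinf}

/-- `rank S = dim S0 + dim S1 + dim S∞`, as a rational number. -/
noncomputable def rank (S : ADHMSub X) : ℚ :=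
  (finrank ℂ S.S0 : ℚ) + (finrank ℂ S.S1 : ℚ) + (finrank ℂ S.Sinf : ℚ)

/-- `ζ·vdim S = ζ₀ dim S0 + ζ₁ dim S1 + ζ∞ dim S∞`. -/
noncomputable def zdeg (ζ : ℚ × ℚ × ℚ) (S : ADHMSub X) : ℚ :=
  ζ.1 * (finrank ℂ S.S0 : ℚ) + ζ.2.1 * (finrank ℂ S.S1 : ℚ) + ζ.2.2 * (finrank ℂ S.Sinf : ℚ)

/-- The slope `μ_{ζ,n}(S)` of a submodule with respect to a flag `F` of length `N`. -/
noncomputable def mu (ζ : ℚ × ℚ × ℚ) (n : ℕ → ℚ) (N : ℕ) (F : ℕ → Submodule ℂ V1)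
    (S : ADHMSub X) : ℚ :=
  (S.zdeg ζ + ∑ k ∈ Finset.Icc 1 N, n k * (finrank ℂ ↥(S.S1 ⊓ F k) : ℚ)) / S.rank

/-- A submodule is nonzero if one of its components is nonzero. -/
def IsNonzero (S : ADHMSub X) : Prop := S.S0 ≠ ⊥ ∨ S.S1 ≠ ⊥ ∨ S.Sinf ≠ ⊥

/-- A submodule is proper if one of its components is a proper subspace. -/
def IsProper (S : ADHMSub X) : Prop := S.S0 ≠ ⊤ ∨ S.S1 ≠ ⊤ ∨ S.Sinf ≠ ⊤

end ADHMSub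

/-- The whole representation, viewed as a submodule of itself. -/
def ADHMData.top (X : ADHMData r V0 V1 Vinf) : ADHMSub X where
  S0 := ⊤
  S1 := ⊤
  Sinf := ⊤
  hB1 := fun _ _ => Submodule.mem_top
  hB2 := fun _ _ => Submodule.mem_top
  hd := fun _ _ => Submodule.mem_top
  hi := fun _ _ _ => Submodule.mem_top
  hj := fun _ _ _ => Submodule.mem_top

/-- A flag of `V1` of length `N`: increasing with 1-dimensional (or zero) steps. -/
structure IsFlag (N : ℕ) (F : ℕ → Submodule ℂ V1) : Prop where
  bot : F 0 = ⊥
  top : F N = ⊤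
  mono : ∀ k < N, F k ≤ F (k + 1)
  step : ∀ k < N, finrank ℂ ↥(F (k + 1)) ≤ finrank ℂ ↥(F k) + 1

/-- A full flag of `V1` of length `N`: increasing with exactly 1-dimensional steps. -/
structure IsFullFlag (N : ℕ) (F : ℕ → Submodule ℂ V1) : Prop where
  bot : F 0 = ⊥
  top : F N = ⊤
  mono : ∀ k < N, F k ≤ F (k + 1)
  dim : ∀ k ≤ N, finrank ℂ ↥(F k) = k

/-- `(ζ,n)`-stability of the pair `(X, F)`. -/
def PairStable (X : ADHMData r V0 V1 Vinf) (ζ : ℚ × ℚ × ℚ) (n : ℕ → ℚ) (N : ℕ)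
    (F : ℕ → Submodule ℂ V1) : Prop :=
  ∀ S : ADHMSub X, S.IsNonzero → S.IsProper → S.mu ζ n N F < X.top.mu ζ n N F

/-- `(ζ,n)`-semistability of the pair `(X, F)`. -/
def PairSemistable (X : ADHMData r V0 V1 Vinf) (ζ : ℚ × ℚ × ℚ) (n : ℕ → ℚ) (N : ℕ)
    (F : ℕ → Submodule ℂ V1) : Prop :=
  ∀ S : ADHMSub X, S.IsNonzero → S.IsProper → S.mu ζ n N F ≤ X.top.mu ζ n N F

namespace ADHMSub

variable {X : ADHMData r V0 V1 Vinf}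

/-- The ADHM representation obtained by restricting all structure maps to a submodule. -/
def subRep (S : ADHMSub X) : ADHMData r S.S0 S.S1 S.Sinf where
  B1 := X.B1.restrict S.hB1
  B2 := X.B2.restrict S.hB2
  d := X.d.restrict S.hd
  i := fun k => (X.i k).restrict (S.hi k)
  j := fun k => (X.j k).restrict (S.hj k)
  rel := by
    ext x
    have hx := LinearMap.congr_fun X.rel (x : V1)
    simp only [LinearMap.add_apply, LinearMap.sub_apply, LinearMap.coe_comp,
      Function.comp_apply, LinearMap.sum_apply, LinearMap.zero_apply] at hx
    simp only [LinearMap.add_apply, LinearMap.sub_apply, LinearMap.coe_comp,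
      Function.comp_apply, LinearMap.sum_apply, LinearMap.zero_apply,
      AddSubmonoidClass.coe_finset_sum, AddSubgroupClass.coe_sub, Submodule.coe_add,
      LinearMap.restrict_coe_apply, ZeroMemClass.coe_zero]
    exact hx

/-- The quotient ADHM representation of `X` by a submodule `S`. -/
def quotRep (S : ADHMSub X) : ADHMData r (V0 ⧸ S.S0) (V1 ⧸ S.S1) (Vinf ⧸ S.Sinf) where
  B1 := Submodule.mapQ S.S1 S.S0 X.B1 (fun x hx => S.hB1 x hx)
  B2 := Submodule.mapQ S.S1 S.S0 X.B2 (fun x hx => S.hB2 x hx)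
  d := Submodule.mapQ S.S0 S.S1 X.d (fun x hx => S.hd x hx)
  i := fun k => Submodule.mapQ S.Sinf S.S0 (X.i k) (fun x hx => S.hi k x hx)
  j := fun k => Submodule.mapQ S.S1 S.Sinf (X.j k) (fun x hx => S.hj k x hx)
  rel := by
    refine Submodule.linearMap_qext _ ?_
    ext x
    have hx := LinearMap.congr_fun X.rel x
    simp only [LinearMap.add_apply, LinearMap.sub_apply, LinearMap.coe_comp,
      Function.comp_apply, LinearMap.sum_apply, LinearMap.zero_apply] at hx
    simp only [LinearMap.add_apply, LinearMap.sub_apply, LinearMap.coe_comp,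
      Function.comp_apply, LinearMap.sum_apply, LinearMap.zero_apply,
      Submodule.mkQ_apply, Submodule.mapQ_apply]
    have hsum : (∑ k : Fin r, Submodule.Quotient.mk (p := S.S0) (X.i k (X.j k x)))
        = Submodule.Quotient.mk (∑ k : Fin r, X.i k (X.j k x)) := by
      rw [← Submodule.mkQ_apply, map_sum]
      simp [Submodule.mkQ_apply]
    rw [hsum, ← Submodule.Quotient.mk_sub, ← Submodule.Quotient.mk_add, hx,
      Submodule.Quotient.mk_zero]

end ADHMSub

end ADHMPrelim


section StarPrelim

/-- `ζ·s` for a triple of rationals and a triple of naturals. -/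
def zdot (z : ℚ × ℚ × ℚ) (s : ℕ × ℕ × ℕ) : ℚ :=
  z.1 * s.1 + z.2.1 * s.2.1 + z.2.2 * s.2.2

/-- `rank s = s₀ + s₁ + s∞`. -/
def srank (s : ℕ × ℕ × ℕ) : ℚ := (s.1 : ℚ) + (s.2.1 : ℚ) + (s.2.2 : ℚ)

/-- The finite set `D` of dimension triples `s ≠ 0` with `0 ≤ s₀ ≤ v₀`, `0 ≤ s₁ ≤ v₁`,
`s∞ ∈ {0,1}` and `ζ⁰·s ≠ 0`. -/
def Dset (v0 v1 : ℕ) (z0 : ℚ × ℚ × ℚ) : Finset (ℕ × ℕ × ℕ) :=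
  (Finset.Iic v0 ×ˢ Finset.Iic v1 ×ˢ Finset.Iic 1).filter
    (fun s => s ≠ (0, 0, 0) ∧ zdot z0 s ≠ 0)

/-- Condition (★) on the stability parameter `(ζ, n)`, relative to `(m, v₀, v₁, ℓ, ζ⁰)`. -/
def SatisfiesStar (m v0 v1 ℓ : ℕ) (z0 ζ : ℚ × ℚ × ℚ) (n : ℕ → ℚ) : Prop :=
  -- (a)
  ζ.1 * (v0 : ℚ) + ζ.2.1 * (v1 : ℚ) + ζ.2.2 = 0 ∧
  -- (b)
  (∀ k ∈ Finset.Icc 1 (v1 - 1),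
      ((v0 : ℚ) + (v1 : ℚ) + 1) * ∑ i ∈ Finset.Icc (k + 1) v1, (i : ℚ) * n i < n k ∧
      0 < ((v0 : ℚ) + (v1 : ℚ) + 1) * ∑ i ∈ Finset.Icc (k + 1) v1, (i : ℚ) * n i) ∧
  -- (c)
  (∀ s ∈ Dset v0 v1 z0, ∀ s' ∈ Dset v0 v1 z0,
      |zdot z0 s - zdot ζ s| / srank s + ∑ i ∈ Finset.Icc 1 v1, (i : ℚ) * n i
        < |zdot z0 s'| / srank s') ∧
  -- (d)
  (0 < (∑ i ∈ Finset.Icc 1 ℓ, (i : ℚ) * n i)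
        - (((v0 : ℚ) + (v1 : ℚ) + 1) / (2 * (m : ℚ) + 1))
          * ((m : ℚ) * ζ.1 + ((m : ℚ) + 1) * ζ.2.1) ∧
   (∑ i ∈ Finset.Icc 1 ℓ, (i : ℚ) * n i)
        - (((v0 : ℚ) + (v1 : ℚ) + 1) / (2 * (m : ℚ) + 1))
          * ((m : ℚ) * ζ.1 + ((m : ℚ) + 1) * ζ.2.1) < n ℓ) ∧
  -- (e)
  ((v0 : ℚ) + (v1 : ℚ) + 1) * ∑ i ∈ Finset.Icc (ℓ + 1) v1, (i : ℚ) * n i <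
      min ((∑ i ∈ Finset.Icc 1 ℓ, (i : ℚ) * n i)
            - (((v0 : ℚ) + (v1 : ℚ) + 1) / (2 * (m : ℚ) + 1))
              * ((m : ℚ) * ζ.1 + ((m : ℚ) + 1) * ζ.2.1))
          ((n ℓ - ∑ i ∈ Finset.Icc 1 ℓ, (i : ℚ) * n i)
            + (((v0 : ℚ) + (v1 : ℚ) + 1) / (2 * (m : ℚ) + 1))
              * ((m : ℚ) * ζ.1 + ((m : ℚ) + 1) * ζ.2.1))

end StarPrelim

/-! Write `rk = v₀ + v₁ + 1` and `e = rk (m ζ₀ + (m + 1) ζ₁) / (2m + 1)`. On the wall, (a) gives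
`ζ·vdim T = -ζ·(v - dim T)` with `v - dim T` proportional to `(m, m + 1)`, hence
`rk · ζ·vdim T = -(rk - rank T) · e`. The flag term of `X` is `A + B` with `A = ∑_{i ≤ ℓ} i nᵢ` and
`B = ∑_{i > ℓ} i nᵢ`; that of `T` is at least `A` when `F^ℓ ⊆ T₁` and at most `A + B - n_ℓ`
otherwise. Conditions (d) and (e) make `B` too small to compensate either bound. -/

open Finset

theorem Finset.sum_Icc_consecutive {M : Type*} [AddCommMonoid M] (f : ℕ → M) {a b c : ℕ}
    (hab : a ≤ b + 1) (hbc : b ≤ c) :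
    ∑ i ∈ Icc a b, f i + ∑ i ∈ Icc (b + 1) c, f i = ∑ i ∈ Icc a c, f i := by
  rw [← Ico_add_one_right_eq_Icc, ← Ico_add_one_right_eq_Icc, ← Ico_add_one_right_eq_Icc,
    sum_Ico_consecutive _ hab (by omega)]

namespace IsFullFlag

variable {V : Type*} [AddCommGroup V] [Module ℂ V] {N : ℕ} {F : ℕ → Submodule ℂ V}

theorem monotoneOn (hF : IsFullFlag N F) : MonotoneOn F (Set.Iic N) :=
  monotoneOn_of_le_succ Set.ordConnected_Iic fun k _ _ hk => hF.mono k (Order.succ_le_iff.mp hk)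

theorem sum_mul_finrank (hF : IsFullFlag N F) (n : ℕ → ℚ) :
    ∑ k ∈ Icc 1 N, n k * (finrank ℂ (F k) : ℚ) = ∑ k ∈ Icc 1 N, (k : ℚ) * n k :=
  sum_congr rfl fun k hk => by rw [hF.dim k (mem_Icc.mp hk).2, mul_comm]

variable {n : ℕ → ℚ}

theorem sum_le_sum_mul_finrank_inf (hF : IsFullFlag N F) (hn : ∀ k ∈ Icc 1 N, 0 ≤ n k)
    {S : Submodule ℂ V} {ℓ : ℕ} (hℓN : ℓ ≤ N) (h : F ℓ ≤ S) :
    ∑ k ∈ Icc 1 ℓ, (k : ℚ) * n k ≤ ∑ k ∈ Icc 1 N, n k * (finrank ℂ ↥(S ⊓ F k) : ℚ) :=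
  calc ∑ k ∈ Icc 1 ℓ, (k : ℚ) * n k
      = ∑ k ∈ Icc 1 ℓ, n k * (finrank ℂ ↥(S ⊓ F k) : ℚ) := sum_congr rfl fun k hk => by
        have hkℓ := (mem_Icc.mp hk).2
        rw [inf_eq_right.mpr ((hF.monotoneOn (hkℓ.trans hℓN) hℓN hkℓ).trans h),
          hF.dim k (hkℓ.trans hℓN), mul_comm]
    _ ≤ ∑ k ∈ Icc 1 N, n k * (finrank ℂ ↥(S ⊓ F k) : ℚ) :=
      sum_le_sum_of_subset_of_nonneg (Icc_subset_Icc_right hℓN) fun k hk _ =>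
        mul_nonneg (hn k hk) (Nat.cast_nonneg _)

variable [FiniteDimensional ℂ V]

theorem finrank_inf_le (hF : IsFullFlag N F) (S : Submodule ℂ V) {k : ℕ} (hk : k ≤ N) :
    finrank ℂ ↥(S ⊓ F k) ≤ k :=
  (Submodule.finrank_mono inf_le_right).trans_eq (hF.dim k hk)

theorem finrank_inf_lt (hF : IsFullFlag N F) {S : Submodule ℂ V} {k : ℕ} (hk : k ≤ N)
    (h : ¬ F k ≤ S) : finrank ℂ ↥(S ⊓ F k) < k :=
  (Submodule.finrank_lt_finrank_of_lt (inf_lt_right.mpr h)).trans_eq (hF.dim k hk)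

theorem sum_mul_finrank_inf_le (hF : IsFullFlag N F) (hn : ∀ k ∈ Icc 1 N, 0 ≤ n k)
    {S : Submodule ℂ V} {ℓ : ℕ} (hℓ : ℓ ∈ Icc 1 N) (h : ¬ F ℓ ≤ S) :
    ∑ k ∈ Icc 1 N, n k * (finrank ℂ ↥(S ⊓ F k) : ℚ) ≤ ∑ k ∈ Icc 1 N, (k : ℚ) * n k - n ℓ := by
  rw [← add_sum_erase _ _ hℓ, ← add_sum_erase _ _ hℓ]
  have hℓ_drop : (finrank ℂ ↥(S ⊓ F ℓ) : ℚ) + 1 ≤ ℓ := by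
    exact_mod_cast hF.finrank_inf_lt (mem_Icc.mp hℓ).2 h
  have hrest : ∑ k ∈ (Icc 1 N).erase ℓ, n k * (finrank ℂ ↥(S ⊓ F k) : ℚ) ≤
      ∑ k ∈ (Icc 1 N).erase ℓ, (k : ℚ) * n k := by
    refine sum_le_sum fun k hk => ?_
    have hk := mem_of_mem_erase hk
    rw [mul_comm]
    exact mul_le_mul_of_nonneg_right (by exact_mod_cast hF.finrank_inf_le S (mem_Icc.mp hk).2)
      (hn k hk)
  nlinarith [hn ℓ hℓ]

end IsFullFlag

section

variable {r : ℕ} {V0 V1 Vinf : Type*}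
  [AddCommGroup V0] [Module ℂ V0] [AddCommGroup V1] [Module ℂ V1]
  [AddCommGroup Vinf] [Module ℂ Vinf]

theorem ADHMData.mu_top (X : ADHMData r V0 V1 Vinf) {N : ℕ} {F : ℕ → Submodule ℂ V1}
    (hF : IsFullFlag N F) (ζ : ℚ × ℚ × ℚ) (n : ℕ → ℚ) :
    X.top.mu ζ n N F =
      (ζ.1 * finrank ℂ V0 + ζ.2.1 * finrank ℂ V1 + ζ.2.2 * finrank ℂ Vinf +
        ∑ k ∈ Icc 1 N, (k : ℚ) * n k) / (finrank ℂ V0 + finrank ℂ V1 + finrank ℂ Vinf) := by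
  have h0 : finrank ℂ X.top.S0 = finrank ℂ V0 := finrank_top ℂ V0
  have h1 : finrank ℂ X.top.S1 = finrank ℂ V1 := finrank_top ℂ V1
  have hinf : finrank ℂ X.top.Sinf = finrank ℂ Vinf := finrank_top ℂ Vinf
  have hflag : ∀ k, finrank ℂ ↥(X.top.S1 ⊓ F k) = finrank ℂ (F k) := fun k => by
    rw [show X.top.S1 ⊓ F k = F k from top_inf_eq (F k)]
  rw [ADHMSub.mu, ADHMSub.zdeg, ADHMSub.rank, h0, h1, hinf]
  simp only [hflag, hF.sum_mul_finrank]

theorem ADHMSub.mu_of_finrank_Sinf_eq_one {X : ADHMData r V0 V1 Vinf} (T : ADHMSub X)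
    (hT : finrank ℂ T.Sinf = 1) (ζ : ℚ × ℚ × ℚ) (n : ℕ → ℚ) (N : ℕ) (F : ℕ → Submodule ℂ V1) :
    T.mu ζ n N F = (ζ.1 * finrank ℂ T.S0 + ζ.2.1 * finrank ℂ T.S1 + ζ.2.2 +
      ∑ k ∈ Icc 1 N, n k * (finrank ℂ ↥(T.S1 ⊓ F k) : ℚ)) /
      (finrank ℂ T.S0 + finrank ℂ T.S1 + 1) := by
  rw [ADHMSub.mu, ADHMSub.zdeg, ADHMSub.rank, hT, Nat.cast_one, mul_one]

theorem ADHMSub.finrank_S1_lt_of_wall [FiniteDimensional ℂ V0] [FiniteDimensional ℂ V1]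
    {X : ADHMData r V0 V1 Vinf} {T : ADHMSub X} {m : ℕ} (hTpr : T.IsProper)
    (hTinf : T.Sinf = ⊤)
    (hTwall : ((m : ℤ) + 1) * ((finrank ℂ V0 : ℤ) - (finrank ℂ T.S0 : ℤ)) =
      (m : ℤ) * ((finrank ℂ V1 : ℤ) - (finrank ℂ T.S1 : ℤ))) :
    finrank ℂ T.S1 < finrank ℂ V1 := by
  refine (Submodule.finrank_le _).lt_of_ne fun h1 => ?_
  rw [h1, sub_self, mul_zero] at hTwall
  have h0 := (mul_eq_zero.mp hTwall).resolve_left (by positivity)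
  have h0 : finrank ℂ T.S0 = finrank ℂ V0 := by omega
  rcases hTpr with h | h | h
  exacts [h (Submodule.eq_top_of_finrank_eq h0), h (Submodule.eq_top_of_finrank_eq h1), h hTinf]

end

theorem rank_mul_zdeg_eq_of_wall {m : ℕ} {ζ : ℚ × ℚ × ℚ} {v0 v1 t0 t1 : ℚ}
    (hζ : ζ.1 * v0 + ζ.2.1 * v1 + ζ.2.2 = 0)
    (hwall : ((m : ℚ) + 1) * (v0 - t0) = m * (v1 - t1)) :
    (v0 + v1 + 1) * (ζ.1 * t0 + ζ.2.1 * t1 + ζ.2.2) =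
      -((v0 + v1 + 1) - (t0 + t1 + 1)) *
        ((v0 + v1 + 1) / (2 * m + 1) * (m * ζ.1 + (m + 1) * ζ.2.1)) := by
  have h2m : (2 * (m : ℚ) + 1) ≠ 0 := by positivity
  field_simp
  linear_combination (v0 + v1 + 1) * ((2 * m + 1) * hζ + (ζ.2.1 - ζ.1) * hwall)

section

variable {rk ρ Z S A B e : ℚ}

theorem div_lt_div_of_flag_gain (hZ : rk * Z = -(rk - ρ) * e) (hρ : 0 < ρ) (hgap : ρ + 1 ≤ rk)
    (hB : 0 ≤ B) (hAS : A ≤ S) (he : rk * B < A - e) :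
    (A + B) / rk < (Z + S) / ρ := by
  have hrk : 0 < rk := by linarith
  have hd : 0 ≤ A - e := by nlinarith
  rw [div_lt_div_iff₀ hrk hρ]
  nlinarith [mul_le_mul_of_nonneg_left hAS hrk.le,
    mul_nonneg (by linarith : (0 : ℚ) ≤ rk - ρ - 1) hd,
    mul_le_mul_of_nonneg_right (by linarith : ρ ≤ rk) hB]

theorem div_lt_div_of_flag_loss {nℓ : ℚ} (hZ : rk * Z = -(rk - ρ) * e) (hρ : 1 ≤ ρ)
    (hgap : ρ < rk) (hB : 0 ≤ B) (hSA : S ≤ A + B - nℓ) (hd : 0 < A - e)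
    (he : rk * B < nℓ - (A - e)) :
    (Z + S) / ρ < (A + B) / rk := by
  rw [div_lt_div_iff₀ (by linarith) (by linarith)]
  nlinarith [mul_le_mul_of_nonneg_left hSA (by linarith : (0 : ℚ) ≤ rk),
    mul_nonneg (by linarith : (0 : ℚ) ≤ ρ) (by linarith : (0 : ℚ) ≤ A - e + B),
    mul_nonneg (by linarith : (0 : ℚ) ≤ rk - 1) hB]

end

theorem mu_lt_iff_flag_not_le_general
    (r m v0 v1 ℓ : ℕ)
    (hℓ : ℓ ∈ Finset.Icc 1 v1)
    (z0 ζ : ℚ × ℚ × ℚ) (n : ℕ → ℚ)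
    (hn : ∀ k ∈ Finset.Icc 1 v1, 0 < n k)
    (hstar : SatisfiesStar m v0 v1 ℓ z0 ζ n)
    {V0 V1 Vinf : Type*} [AddCommGroup V0] [Module ℂ V0] [FiniteDimensional ℂ V0]
    [AddCommGroup V1] [Module ℂ V1] [FiniteDimensional ℂ V1]
    [AddCommGroup Vinf] [Module ℂ Vinf]
    (X : ADHMData r V0 V1 Vinf)
    (hV0 : finrank ℂ V0 = v0) (hV1 : finrank ℂ V1 = v1) (hVinf : finrank ℂ Vinf = 1)
    (F : ℕ → Submodule ℂ V1) (hF : IsFullFlag v1 F)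
    (T : ADHMSub X) (hTpr : T.IsProper) (hTinf : T.Sinf = ⊤)
    (hTwall : ((m : ℤ) + 1) * ((finrank ℂ V0 : ℤ) - (finrank ℂ T.S0 : ℤ)) =
      (m : ℤ) * ((finrank ℂ V1 : ℤ) - (finrank ℂ T.S1 : ℤ))) :
    T.mu ζ n v1 F ≠ X.top.mu ζ n v1 F ∧
    (T.mu ζ n v1 F < X.top.mu ζ n v1 F ↔ ¬ F ℓ ≤ T.S1) := by
  obtain ⟨hζ, -, -, ⟨hd, -⟩, he⟩ := hstar
  obtain ⟨he_gain, he_loss⟩ := lt_min_iff.mp he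
  have hℓN := (mem_Icc.mp hℓ).2
  have hn0 : ∀ k ∈ Icc 1 v1, 0 ≤ n k := fun k hk => (hn k hk).le
  have hB : 0 ≤ ∑ i ∈ Icc (ℓ + 1) v1, (i : ℚ) * n i := sum_nonneg fun k hk =>
    mul_nonneg (Nat.cast_nonneg k) (hn0 k (Icc_subset_Icc_left (by omega) hk))
  have hT0 : (finrank ℂ T.S0 : ℚ) ≤ v0 := by exact_mod_cast hV0 ▸ T.S0.finrank_le
  have hT1 : (finrank ℂ T.S1 : ℚ) + 1 ≤ v1 := by
    exact_mod_cast hV1 ▸ T.finrank_S1_lt_of_wall hTpr hTinf hTwall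
  rw [hV0, hV1] at hTwall
  have hZ := rank_mul_zdeg_eq_of_wall (t0 := finrank ℂ T.S0) (t1 := finrank ℂ T.S1) hζ
    (by exact_mod_cast hTwall)
  have hTinf1 : finrank ℂ T.Sinf = 1 := by rw [hTinf, finrank_top, hVinf]
  have hSum := sum_Icc_consecutive (fun i => (i : ℚ) * n i) (by omega : 1 ≤ ℓ + 1) hℓN
  rw [T.mu_of_finrank_Sinf_eq_one hTinf1, X.mu_top hF, hV0, hV1, hVinf, Nat.cast_one, mul_one,
    hζ, zero_add, ← hSum]
  by_cases hle : F ℓ ≤ T.S1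
  · have hlt := div_lt_div_of_flag_gain hZ (by positivity) (by linarith) hB
      (hF.sum_le_sum_mul_finrank_inf hn0 hℓN hle) he_gain
    exact ⟨hlt.ne', iff_of_false hlt.not_gt (not_not.2 hle)⟩
  · have hlt := div_lt_div_of_flag_loss hZ (le_add_of_nonneg_left (by positivity))
      (by linarith) hB (hSum ▸ hF.sum_mul_finrank_inf_le hn0 hℓ hle) hd (by linarith)
    exact ⟨hlt.ne, iff_of_true hlt hle⟩

/-- Under condition (★): for a proper submodule `T` with `T∞ = V∞` lying on the wall
`(m+1)·(v₀ − dim T₀) = m·(v₁ − dim T₁)`, the slope of `T` never equals that of `X`, and it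
is smaller iff `F^ℓ ⊄ T₁`. -/
theorem mu_lt_iff_flag_not_le
    (r m v0 v1 ℓ : ℕ) (hr : 1 ≤ r) (hv0 : 1 ≤ v0) (hv1 : 1 ≤ v1)
    (hℓ : ℓ ∈ Finset.Icc 1 v1)
    (z0 ζ : ℚ × ℚ × ℚ) (n : ℕ → ℚ)
    (hz0 : z0.1 < 0)
    (hwall : (m : ℚ) * z0.1 + ((m : ℚ) + 1) * z0.2.1 = 0)
    (hnorm : z0.1 * (v0 : ℚ) + z0.2.1 * (v1 : ℚ) + z0.2.2 = 0)
    (hn : ∀ k ∈ Finset.Icc 1 v1, 0 < n k)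
    (hstar : SatisfiesStar m v0 v1 ℓ z0 ζ n)
    {V0 V1 Vinf : Type*} [AddCommGroup V0] [Module ℂ V0] [FiniteDimensional ℂ V0]
    [AddCommGroup V1] [Module ℂ V1] [FiniteDimensional ℂ V1]
    [AddCommGroup Vinf] [Module ℂ Vinf] [FiniteDimensional ℂ Vinf]
    (X : ADHMData r V0 V1 Vinf)
    (hV0 : finrank ℂ V0 = v0) (hV1 : finrank ℂ V1 = v1) (hVinf : finrank ℂ Vinf = 1)
    (F : ℕ → Submodule ℂ V1) (hF : IsFullFlag v1 F)
    (T : ADHMSub X) (hTpr : T.IsProper) (hTinf : T.Sinf = ⊤)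
    (hTwall : ((m : ℤ) + 1) * ((finrank ℂ V0 : ℤ) - (finrank ℂ T.S0 : ℤ)) =
      (m : ℤ) * ((finrank ℂ V1 : ℤ) - (finrank ℂ T.S1 : ℤ))) :
    T.mu ζ n v1 F ≠ X.top.mu ζ n v1 F ∧
    (T.mu ζ n v1 F < X.top.mu ζ n v1 F ↔ ¬ F ℓ ≤ T.S1) :=
  mu_lt_iff_flag_not_le_general r m v0 v1 ℓ hℓ z0 ζ n hn hstar X hV0 hV1 hVinf F hF T hTpr hTinf
    hTwall
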